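/- Residual formula for the exponential approximation: suppose AV = V(T ⊗ I_p) + W(τ E^T ⊗ I_p) with V ∈ ℝ^{n×2mp} having F-orthonormal block columns, W a unit-Frobenius-norm block F-orthogonal to them, τ ∈ ℝ^{1×2}, E ∈ ℝ^{2m×2} the last two columns of I_{2m}. Define U(t) = β V(exp(−tT)e_1 ⊗ I_p) for β ∈ ℝ. Then the residual R(t) = U'(t) + A U(t) satisfies R(t) = β W(τ E^T exp(−tT) e_1 ⊗ I_p) and hence ‖R(t)‖_F = |β| · ‖τ E^T exp(−tT) e_1‖_2. -/

import Mathlib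

open Matrix BigOperators

/-- Frobenius inner product `⟨X,Y⟩_F = trace(Yᵀ X)`. -/
noncomputable def finner {n p : ℕ} (X Y : Matrix (Fin n) (Fin p) ℝ) : ℝ :=
  Matrix.trace (Yᵀ * X)

/-- Frobenius norm. -/
noncomputable def fnorm {n p : ℕ} (X : Matrix (Fin n) (Fin p) ℝ) : ℝ :=
  Real.sqrt (finner X X)

/-- `E = [e_{2m−1}, e_{2m}]`, the last two columns of `I_{2m}` (0-indexed). -/
def Ecols (m : ℕ) : Matrix (Fin (2 * m)) (Fin 2) ℝ :=
  fun j k => if (j : ℕ) = 2 * m - 2 + (k : ℕ) then 1 else 0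

/-!
Write `y(t) = exp(−tT) e₁`, so that `U(t) = β ∑ₖ yₖ(t) Vₖ` and `y' = −T y`. Hence
`U' = −β ∑ₖ (T y)ₖ Vₖ`, while the Arnoldi relation gives
`A U = β ∑ₖ (T y)ₖ Vₖ + β (τ Eᵀ y) W`: the Krylov parts cancel in `U' + A U` and only the
`W`-component survives. Its Frobenius norm is `|β| |τ Eᵀ y| ‖W‖_F` with `‖W‖_F = 1`.
-/

section MatrixExp

variable {ι : Type*} [Fintype ι] [DecidableEq ι]

attribute [local instance] Matrix.linftyOpNormedAddCommGroup Matrix.linftyOpNormedRing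
  Matrix.linftyOpNormedAlgebra

theorem Matrix.hasDerivAt_exp_neg_smul_mulVec (T : Matrix ι ι ℝ) (v : ι → ℝ) (t : ℝ) :
    HasDerivAt (fun s : ℝ => NormedSpace.exp ((-s) • T) *ᵥ v)
      (-(T *ᵥ (NormedSpace.exp ((-t) • T) *ᵥ v))) t := by
  have hexp := (hasDerivAt_exp_smul_const' T (-t)).scomp t (hasDerivAt_neg t)
  refine (((Matrix.mulVecBilin ℝ ℝ).flip v).toContinuousLinearMap.hasFDerivAt.comp_hasDerivAt t
    hexp).congr_deriv ?_
  change ((-1 : ℝ) • (T * _)) *ᵥ v = _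
  rw [neg_one_smul, Matrix.neg_mulVec, Matrix.mulVec_mulVec]
  -- the sides differ only in using the `linftyOp` or the plain matrix instances, which are defeq
  rfl

end MatrixExp

theorem Matrix.hasDerivAt_sum_smul_apply {ι m p : Type*} [Fintype ι] (V : ι → Matrix m p ℝ)
    {y : ℝ → ι → ℝ} {y' : ι → ℝ} {t : ℝ} (hy : HasDerivAt y y' t) (i : m) (j : p) :
    HasDerivAt (fun s => (∑ k, y s k • V k) i j) ((∑ k, y' k • V k) i j) t := by
  simp only [Matrix.sum_apply, Matrix.smul_apply, smul_eq_mul]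
  exact HasDerivAt.fun_sum fun k _ => (hasDerivAt_pi.mp hy k).mul_const _

theorem Matrix.mul_sum_smul_of_arnoldi {R ι m p : Type*} [CommRing R] [Fintype ι] [Fintype m]
    (A : Matrix m m R) (T : Matrix ι ι R) (V : ι → Matrix m p R) (W : Matrix m p R)
    (c : ι → R) (hArnoldi : ∀ j, A * V j = (∑ i, T i j • V i) + c j • W) (y : ι → R) :
    A * ∑ k, y k • V k = (∑ k, (T *ᵥ y) k • V k) + (c ⬝ᵥ y) • W := by
  simp only [Matrix.mul_sum, Matrix.mul_smul, hArnoldi, smul_add, Finset.sum_add_distrib,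
    Finset.smul_sum, smul_smul, Matrix.mulVec, dotProduct, Finset.sum_smul]
  rw [Finset.sum_comm]
  simp only [mul_comm]

theorem finner_smul_smul {n p : ℕ} (a b : ℝ) (X Y : Matrix (Fin n) (Fin p) ℝ) :
    finner (a • X) (b • Y) = a * b * finner X Y := by
  simp only [finner, Matrix.transpose_smul, Matrix.smul_mul, Matrix.mul_smul,
    Matrix.trace_smul, smul_eq_mul]
  ring

theorem fnorm_smul {n p : ℕ} (a : ℝ) (X : Matrix (Fin n) (Fin p) ℝ) :
    fnorm (a • X) = |a| * fnorm X := by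
  rw [fnorm, fnorm, finner_smul_smul, Real.sqrt_mul (mul_self_nonneg a), Real.sqrt_mul_self_eq_abs]

/-- residual formula for the exponential approximation:
with `U(t) = β V(exp(−tT)e₁ ⊗ I_p)`, the residual `R(t) = U'(t) + A U(t)` equals
`β W(τ Eᵀ exp(−tT) e₁ ⊗ I_p)` and `‖R(t)‖_F = |β| · ‖τ Eᵀ exp(−tT) e₁‖₂`
(a scalar, so the norm is its absolute value). -/
theorem exp_residual_formula {n p m : ℕ} (hm : 0 < m)
    (A : Matrix (Fin n) (Fin n) ℝ)
    (T : Matrix (Fin (2 * m)) (Fin (2 * m)) ℝ)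
    (V : Fin (2 * m) → Matrix (Fin n) (Fin p) ℝ)
    (W : Matrix (Fin n) (Fin p) ℝ)
    (hWnorm : fnorm W = 1)
    (τ : Fin 2 → ℝ)
    (hArnoldi : ∀ j, A * V j =
      (∑ i, T i j • V i) + (Matrix.vecMul τ (Ecols m)ᵀ j) • W)
    (β : ℝ)
    (U : ℝ → Matrix (Fin n) (Fin p) ℝ)
    (hU : ∀ t, U t = β • ∑ i,
      ((NormedSpace.exp ((-t) • T)).mulVec (Pi.single ⟨0, by omega⟩ 1)) i • V i)
    (U' : ℝ → Matrix (Fin n) (Fin p) ℝ)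
    (hU' : ∀ t i j, HasDerivAt (fun τ' => U τ' i j) (U' t i j) t)
    (t : ℝ) :
    U' t + A * U t =
      β • (Matrix.vecMul τ (Ecols m)ᵀ ⬝ᵥ
        (NormedSpace.exp ((-t) • T)).mulVec (Pi.single ⟨0, by omega⟩ 1)) • W ∧
    fnorm (U' t + A * U t) =
      |β| * |Matrix.vecMul τ (Ecols m)ᵀ ⬝ᵥ
        (NormedSpace.exp ((-t) • T)).mulVec (Pi.single ⟨0, by omega⟩ 1)| := by
  set y := fun s : ℝ => NormedSpace.exp ((-s) • T) *ᵥ Pi.single (⟨0, by omega⟩ : Fin (2 * m)) 1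
  have hU'_eq : U' t = β • ∑ k, (-(T *ᵥ y t)) k • V k := by
    ext i j
    refine (hU' t i j).unique ?_
    simp only [hU, Matrix.smul_apply, smul_eq_mul]
    exact ((Matrix.hasDerivAt_sum_smul_apply V
      (Matrix.hasDerivAt_exp_neg_smul_mulVec T _ t) i j).const_mul β)
  have hR : U' t + A * U t = β • (Matrix.vecMul τ (Ecols m)ᵀ ⬝ᵥ y t) • W := by
    have hUt : U t = β • ∑ k, y t k • V k := hU t
    rw [hU'_eq, hUt, Matrix.mul_smul, Matrix.mul_sum_smul_of_arnoldi A T V W _ hArnoldi,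
      ← smul_add]
    simp only [Pi.neg_apply, neg_smul, Finset.sum_neg_distrib, neg_add_cancel_left]
  refine ⟨hR, ?_⟩
  rw [hR, fnorm_smul, fnorm_smul, hWnorm, mul_one]
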